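/- arXiv:2304.10033 — 2 statements merged into one kernel-verified Lean document; each statement's English description precedes it below -/
import Mathlib

section
/- (Bretagnolle–Huber inequality) For any two probability measures P and Q on a common measurable space, TV(P,Q) ≤ sqrt(1 − exp(−KL(P‖Q))). -/
/-!
Write `B = ∫ √(dP dQ)` for the Bhattacharyya coefficient. Since `√(dQ/dP) = exp(-llr/2)`,
Jensen's inequality for `exp` gives `exp(-KL/2) ≤ B`. For an event `E`, Cauchy–Schwarz on `E`
and on `Eᶜ` gives `B ≤ √(P E · Q E) + √((1 - P E)(1 - Q E))`, and the square of the right side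
is at most `1 - (P E - Q E)²`. Hence `(P E - Q E)² ≤ 1 - exp(-KL)`.
-/

open MeasureTheory
open scoped ENNReal Classical

/-- Total variation distance `TV(P,Q) = sup_E |P(E) − Q(E)|` over measurable events. -/
noncomputable def tvDist {Ω : Type*} [MeasurableSpace Ω] (P Q : Measure Ω) : ℝ :=
  ⨆ E : {s : Set Ω // MeasurableSet s}, |(P E.1).toReal - (Q E.1).toReal|

/-- Kullback–Leibler divergence (in nats): `∫ ln(dP/dQ) dP` when `P ≪ Q` (and the
log-likelihood ratio is integrable), and `+∞` otherwise. -/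
noncomputable def klDivM {Ω : Type*} [MeasurableSpace Ω] (P Q : Measure Ω) : ℝ≥0∞ :=
  if P ≪ Q ∧ Integrable (llr P Q) P then ENNReal.ofReal (∫ ω, llr P Q ω ∂P) else ⊤

open Real InformationTheory

lemma sq_sqrt_mul_add_sqrt_one_sub_mul_le {a b : ℝ} (ha₀ : 0 ≤ a) (ha₁ : a ≤ 1) (hb₀ : 0 ≤ b)
    (hb₁ : b ≤ 1) :
    (√(a * b) + √((1 - a) * (1 - b))) ^ 2 ≤ 1 - (a - b) ^ 2 := by
  rw [sqrt_mul ha₀, sqrt_mul (by linarith)]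
  have h1 := sq_sqrt ha₀
  have h2 := sq_sqrt hb₀
  have h3 := sq_sqrt (by linarith : 0 ≤ 1 - a)
  have h4 := sq_sqrt (by linarith : 0 ≤ 1 - b)
  -- the defect `1 - (a - b) ^ 2 - (lhs)` is exactly `(√(b (1 - b)) - √(a (1 - a))) ^ 2`
  nlinarith [sq_nonneg (√b * √(1 - b) - √a * √(1 - a)), sqrt_nonneg a, sqrt_nonneg b,
    sqrt_nonneg (1 - a), sqrt_nonneg (1 - b)]

section

variable {α : Type*} [MeasurableSpace α] {μ ν : Measure α}

lemma ofReal_exp_integral_le_lintegral [IsProbabilityMeasure μ] {f : α → ℝ}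
    (hf : Integrable f μ) :
    ENNReal.ofReal (exp (∫ x, f x ∂μ)) ≤ ∫⁻ x, ENNReal.ofReal (exp (f x)) ∂μ := by
  have exp_nonneg : 0 ≤ᵐ[μ] fun x ↦ exp (f x) := ae_of_all _ fun x ↦ (exp_pos _).le
  by_cases hexp : Integrable (fun x ↦ exp (f x)) μ
  · rw [← ofReal_integral_eq_lintegral_ofReal hexp exp_nonneg]
    exact ENNReal.ofReal_le_ofReal <| convexOn_exp.map_integral_le continuousOn_exp
      isClosed_univ (ae_of_all _ fun _ ↦ Set.mem_univ _) hf hexp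
  · have h_top : ∫⁻ x, ENNReal.ofReal (exp (f x)) ∂μ = ∞ := by
      rw [← not_lt_top_iff, ← hasFiniteIntegral_iff_ofReal exp_nonneg]
      exact fun h ↦ hexp ⟨continuous_exp.comp_aestronglyMeasurable hf.1, h⟩
    simp [h_top]

lemma setLIntegral_rpow_rnDeriv_le [IsFiniteMeasure μ] [IsFiniteMeasure ν] (s : Set α) :
    ∫⁻ x in s, ν.rnDeriv μ x ^ (1 / 2 : ℝ) ∂μ ≤ ENNReal.ofReal (√(μ.real s * ν.real s)) := by
  have holder := ENNReal.lintegral_mul_le_Lp_mul_Lq (μ.restrict s) Real.HolderConjugate.two_two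
    ((ν.measurable_rnDeriv μ).pow_const (1 / 2 : ℝ)).aemeasurable (aemeasurable_const (b := 1))
  simp only [Pi.mul_apply, mul_one, ENNReal.one_rpow, lintegral_const,
    Measure.restrict_apply_univ, one_mul, ← ENNReal.rpow_mul] at holder
  norm_num at holder
  calc _ ≤ (∫⁻ x in s, ν.rnDeriv μ x ∂μ) ^ (1 / 2 : ℝ) * μ s ^ (1 / 2 : ℝ) := holder
    _ ≤ ν s ^ (1 / 2 : ℝ) * μ s ^ (1 / 2 : ℝ) := by gcongr; exact ν.setLIntegral_rnDeriv_le s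
    _ = ENNReal.ofReal (√(μ.real s * ν.real s)) := by
      rw [sqrt_eq_rpow, ← ENNReal.ofReal_rpow_of_nonneg (by positivity) (by norm_num),
        ENNReal.ofReal_mul measureReal_nonneg, ofReal_measureReal, ofReal_measureReal,
        ENNReal.mul_rpow_of_nonneg _ _ (by norm_num), mul_comm]

/-- `∫ √(dμ dν)`, with densities taken relative to `μ`. -/
noncomputable def bhattacharyyaCoeff (μ ν : Measure α) : ℝ≥0∞ :=
  ∫⁻ x, ν.rnDeriv μ x ^ (1 / 2 : ℝ) ∂μ

lemma bhattacharyyaCoeff_le [IsFiniteMeasure μ] [IsFiniteMeasure ν] {E : Set α}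
    (hE : MeasurableSet E) :
    bhattacharyyaCoeff μ ν ≤
      ENNReal.ofReal (√(μ.real E * ν.real E) + √(μ.real Eᶜ * ν.real Eᶜ)) := by
  rw [bhattacharyyaCoeff, ← lintegral_add_compl _ hE,
    ENNReal.ofReal_add (by positivity) (by positivity)]
  exact add_le_add (setLIntegral_rpow_rnDeriv_le E) (setLIntegral_rpow_rnDeriv_le Eᶜ)

lemma ofReal_exp_neg_half_integral_llr_le [IsProbabilityMeasure μ] [SigmaFinite ν]
    (hμν : μ ≪ ν) (h_int : Integrable (llr μ ν) μ) :
    ENNReal.ofReal (exp (-(∫ x, llr μ ν x ∂μ) / 2)) ≤ bhattacharyyaCoeff μ ν := by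
  have h_ae : (fun x ↦ ENNReal.ofReal (exp (-llr μ ν x / 2))) =ᵐ[μ]
      fun x ↦ ν.rnDeriv μ x ^ (1 / 2 : ℝ) := by
    filter_upwards [exp_neg_llr hμν, ν.rnDeriv_lt_top μ] with x hx h_lt_top
    rw [neg_div, div_eq_mul_one_div, ← neg_mul, exp_mul, hx,
      ← ENNReal.ofReal_rpow_of_nonneg ENNReal.toReal_nonneg (by norm_num),
      ENNReal.ofReal_toReal h_lt_top.ne]
  calc ENNReal.ofReal (exp (-(∫ x, llr μ ν x ∂μ) / 2))
      = ENNReal.ofReal (exp (∫ x, -llr μ ν x / 2 ∂μ)) := by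
        rw [integral_div, integral_neg]
    _ ≤ ∫⁻ x, ENNReal.ofReal (exp (-llr μ ν x / 2)) ∂μ :=
        ofReal_exp_integral_le_lintegral (h_int.neg.div_const 2)
    _ = bhattacharyyaCoeff μ ν := lintegral_congr_ae h_ae

lemma klDivM_eq_klDiv [IsProbabilityMeasure μ] [IsProbabilityMeasure ν] :
    klDivM μ ν = klDiv μ ν := by
  unfold klDivM
  split_ifs with h
  · simp [klDiv_of_ac_of_integrable h.1 h.2]
  · exact (klDiv_eq_top_iff.2 fun hμν h_int ↦ h ⟨hμν, h_int⟩).symm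

lemma tvDist_le_of_forall {c : ℝ} (h : ∀ E, MeasurableSet E → |μ.real E - ν.real E| ≤ c) :
    tvDist μ ν ≤ c :=
  have : Nonempty {s : Set α // MeasurableSet s} := ⟨⟨∅, .empty⟩⟩
  ciSup_le fun E ↦ h E.1 E.2

lemma sq_measureReal_sub_le_one_sub_exp_neg_klDiv [IsProbabilityMeasure μ]
    [IsProbabilityMeasure ν] (h : klDiv μ ν ≠ ∞) {E : Set α} (hE : MeasurableSet E) :
    (μ.real E - ν.real E) ^ 2 ≤ 1 - exp (-(klDiv μ ν).toReal) := by
  obtain ⟨hμν, h_int⟩ := klDiv_ne_top_iff.1 h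
  rw [toReal_klDiv_of_measure_eq hμν (by simp)]
  have h_bound := (ENNReal.ofReal_le_ofReal_iff (by positivity)).1
    ((ofReal_exp_neg_half_integral_llr_le hμν h_int).trans (bhattacharyyaCoeff_le hE))
  rw [probReal_compl_eq_one_sub hE, probReal_compl_eq_one_sub hE] at h_bound
  calc (μ.real E - ν.real E) ^ 2
      ≤ 1 - (√(μ.real E * ν.real E) + √((1 - μ.real E) * (1 - ν.real E))) ^ 2 := by
        linarith [sq_sqrt_mul_add_sqrt_one_sub_mul_le (a := μ.real E) (b := ν.real E)
          measureReal_nonneg measureReal_le_one measureReal_nonneg measureReal_le_one]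
    _ ≤ 1 - exp (-(∫ x, llr μ ν x ∂μ) / 2) ^ 2 := by gcongr
    _ = 1 - exp (-∫ x, llr μ ν x ∂μ) := by rw [← exp_nat_mul]; ring_nf

end

/-- **Bretagnolle–Huber inequality.** For any two probability measures `P` and `Q` on a
common measurable space, `TV(P,Q) ≤ sqrt(1 − exp(−KL(P‖Q)))` (with the right-hand side
equal to `1` when `KL(P‖Q) = ∞`). -/
theorem bretagnolle_huber {Ω : Type*} [MeasurableSpace Ω] (P Q : Measure Ω)
    [IsProbabilityMeasure P] [IsProbabilityMeasure Q] :
    tvDist P Q ≤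
      if klDivM P Q = ⊤ then 1
      else Real.sqrt (1 - Real.exp (-(klDivM P Q).toReal)) := by
  rw [klDivM_eq_klDiv]
  refine tvDist_le_of_forall fun E hE ↦ ?_
  split_ifs with hKL
  · exact abs_sub_le_of_nonneg_of_le measureReal_nonneg measureReal_le_one
      measureReal_nonneg measureReal_le_one
  · exact abs_le_sqrt (sq_measureReal_sub_le_one_sub_exp_neg_klDiv hKL hE)
end

section
/- Let 𝒳 and 𝒴 be finite alphabets, let W and Ŵ be two DMCs from 𝒳 to 𝒴, and let P_X be a pmf on 𝒳. Then the total variation distance between the n-fold product joint distributions satisfies TV( (Ŵ·P_X)^n, (W·P_X)^n ) ≤ sqrt( 1 − exp( −n·KL(Ŵ·P_X ‖ W·P_X) ) ), where (Ŵ·P_X)^n denotes the n-fold product of the joint pmf (x,y) ↦ P_X(x)·Ŵ(y|x). -/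
/-!
Le Cam's inequality bounds the total variation by the Hellinger affinity `A(P, Q) = ∑ √(P Q)`:
`TV(P, Q) ≤ 1 − ∑ min(P, Q)` and, by Cauchy–Schwarz, `A² ≤ (∑ min)(∑ max) = (∑ min)(2 − ∑ min)`,
so `TV ≤ √(1 − A²)`. The affinity is multiplicative, `A(Pⁿ, Qⁿ) = Aⁿ`, and Jensen's inequality
for `exp` gives `A ≥ exp(−KL/2)`, hence `TV(Pⁿ, Qⁿ) ≤ √(1 − A²ⁿ) ≤ √(1 − exp(−n KL))`.
-/

open scoped BigOperators Classical ENNReal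

/-- `P` is a probability mass function on the finite type `Ω`. -/
def IsPMF {Ω : Type*} [Fintype Ω] (P : Ω → ℝ) : Prop :=
  (∀ ω, 0 ≤ P ω) ∧ ∑ ω, P ω = 1

/-- `W` is a discrete memoryless channel from `𝒳` to `𝒴`. -/
def IsDMC {𝒳 𝒴 : Type*} [Fintype 𝒴] (W : 𝒳 → 𝒴 → ℝ) : Prop :=
  ∀ x, IsPMF (W x)

/-- Total variation distance between pmfs on a finite type:
`TV(P,Q) = sup_E |P(E) − Q(E)|` over all events `E`. -/
noncomputable def tvFin {Ω : Type*} [Fintype Ω] (P Q : Ω → ℝ) : ℝ :=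
  ⨆ E : Finset Ω, |∑ ω ∈ E, P ω - ∑ ω ∈ E, Q ω|

/-- Kullback–Leibler divergence (in nats) between pmfs on a finite type, as a real
number (convention `0·ln(0/q) = 0`). -/
noncomputable def klDivFin {Ω : Type*} [Fintype Ω] (P Q : Ω → ℝ) : ℝ :=
  ∑ ω, P ω * Real.log (P ω / Q ω)

/-- Extended Kullback–Leibler divergence: `+∞` when `P` is not absolutely continuous
with respect to `Q`. -/
noncomputable def klDivE {Ω : Type*} [Fintype Ω] (P Q : Ω → ℝ) : ℝ≥0∞ :=
  if ∀ ω, Q ω = 0 → P ω = 0 then ENNReal.ofReal (klDivFin P Q) else ⊤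

open Finset Real

lemma IsDMC.isPMF_joint {𝒳 𝒴 : Type*} [Fintype 𝒳] [Fintype 𝒴] {V : 𝒳 → 𝒴 → ℝ} (hV : IsDMC V)
    {PX : 𝒳 → ℝ} (hPX : IsPMF PX) : IsPMF fun q : 𝒳 × 𝒴 => PX q.1 * V q.1 q.2 := by
  refine ⟨fun q => mul_nonneg (hPX.1 q.1) ((hV q.1).1 q.2), ?_⟩
  simp only [Fintype.sum_prod_type, ← mul_sum, fun x => (hV x).2, mul_one, hPX.2]

section PMF
variable {Ω : Type*} [Fintype Ω] {P Q : Ω → ℝ}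

noncomputable def hellingerAffinity (P Q : Ω → ℝ) : ℝ :=
  ∑ ω, √(P ω * Q ω)

lemma IsPMF.pi (hP : IsPMF P) (ι : Type*) [Fintype ι] [DecidableEq ι] :
    IsPMF fun p : ι → Ω => ∏ i, P (p i) :=
  ⟨fun p => prod_nonneg fun i _ => hP.1 (p i), by
    rw [← Fintype.prod_sum (fun (_ : ι) ω => P ω), hP.2, prod_const_one]⟩

lemma hellingerAffinity_pi (hP : IsPMF P) (hQ : IsPMF Q) (ι : Type*) [Fintype ι] [DecidableEq ι] :
    hellingerAffinity (fun p : ι → Ω => ∏ i, P (p i)) (fun p => ∏ i, Q (p i)) =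
      hellingerAffinity P Q ^ Fintype.card ι := by
  rw [hellingerAffinity, hellingerAffinity, ← card_univ, ← prod_const, Fintype.prod_sum]
  refine sum_congr rfl fun p _ => ?_
  rw [← prod_mul_distrib, sqrt_prod _ fun i _ => mul_nonneg (hP.1 _) (hQ.1 _)]

lemma hellingerAffinity_le_one (hP : IsPMF P) (hQ : IsPMF Q) : hellingerAffinity P Q ≤ 1 := by
  calc hellingerAffinity P Q = ∑ ω, √(P ω) * √(Q ω) :=
        sum_congr rfl fun ω _ => sqrt_mul (hP.1 ω) _
    _ ≤ √(∑ ω, P ω) * √(∑ ω, Q ω) := sum_sqrt_mul_sqrt_le _ hP.1 hQ.1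
    _ = 1 := by rw [hP.2, hQ.2, sqrt_one, one_mul]

lemma sum_sub_sum_le_one_sub_sum_min (hP : ∑ ω, P ω = 1) (E : Finset Ω) :
    ∑ ω ∈ E, P ω - ∑ ω ∈ E, Q ω ≤ 1 - ∑ ω, min (P ω) (Q ω) :=
  calc ∑ ω ∈ E, P ω - ∑ ω ∈ E, Q ω ≤ ∑ ω ∈ E, (P ω - min (P ω) (Q ω)) := by
        rw [← sum_sub_distrib]
        exact sum_le_sum fun ω _ => sub_le_sub_left (min_le_right _ _) _
    _ ≤ ∑ ω, (P ω - min (P ω) (Q ω)) :=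
        sum_le_sum_of_subset_of_nonneg (subset_univ E) fun ω _ _ => sub_nonneg.2 (min_le_left _ _)
    _ = 1 - ∑ ω, min (P ω) (Q ω) := by rw [sum_sub_distrib, hP]

lemma tvFin_le_one_sub_sum_min (hP : ∑ ω, P ω = 1) (hQ : ∑ ω, Q ω = 1) :
    tvFin P Q ≤ 1 - ∑ ω, min (P ω) (Q ω) := by
  refine ciSup_le fun E => abs_sub_le_iff.2 ⟨sum_sub_sum_le_one_sub_sum_min hP E, ?_⟩
  simpa only [min_comm (Q _)] using sum_sub_sum_le_one_sub_sum_min (Q := P) hQ E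

/-- Cauchy–Schwarz applied to `√(P Q) = √(min P Q) · √(max P Q)`. -/
lemma sq_hellingerAffinity_le (hP : IsPMF P) (hQ : IsPMF Q) :
    hellingerAffinity P Q ^ 2 ≤
      (∑ ω, min (P ω) (Q ω)) * (2 - ∑ ω, min (P ω) (Q ω)) := by
  have hmax : ∑ ω, max (P ω) (Q ω) = 2 - ∑ ω, min (P ω) (Q ω) := by
    rw [eq_sub_iff_add_eq, ← sum_add_distrib]
    simp only [max_add_min]
    rw [sum_add_distrib, hP.2, hQ.2, one_add_one_eq_two]
  rw [← hmax]
  refine sum_sq_le_sum_mul_sum_of_sq_le_mul _ (fun ω _ => le_min (hP.1 ω) (hQ.1 ω))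
    (fun ω _ => le_max_of_le_left (hP.1 ω)) fun ω _ => ?_
  rw [sq_sqrt (mul_nonneg (hP.1 ω) (hQ.1 ω)), min_mul_max]

lemma tvFin_le_sqrt_one_sub_sq_hellingerAffinity (hP : IsPMF P) (hQ : IsPMF Q) :
    tvFin P Q ≤ √(1 - hellingerAffinity P Q ^ 2) := by
  set m := ∑ ω, min (P ω) (Q ω)
  have hm : m ≤ 1 := hP.2 ▸ sum_le_sum fun ω _ => min_le_left _ _
  calc tvFin P Q ≤ 1 - m := tvFin_le_one_sub_sum_min hP.2 hQ.2
    _ = √((1 - m) ^ 2) := (sqrt_sq (sub_nonneg.2 hm)).symm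
    _ ≤ √(1 - hellingerAffinity P Q ^ 2) := by
      gcongr
      nlinarith [sq_hellingerAffinity_le hP hQ]

lemma mul_exp_neg_log_div_div_two {p q : ℝ} (hp : 0 < p) (hq : 0 < q) :
    p * exp (-log (p / q) / 2) = √(p * q) := by
  have hL : -log (p / q) / 2 + -log (p / q) / 2 = -log (p / q) := by ring
  rw [eq_comm, sqrt_eq_iff_mul_self_eq (mul_pos hp hq).le (by positivity), mul_mul_mul_comm,
    ← exp_add, hL, exp_neg, exp_log (div_pos hp hq)]
  field_simp

/-- Jensen's inequality for `exp`, weighted by `P` over its support. -/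
lemma exp_neg_klDivFin_div_two_le (hP : IsPMF P) (hQ : IsPMF Q)
    (hac : ∀ ω, Q ω = 0 → P ω = 0) :
    exp (-klDivFin P Q / 2) ≤ hellingerAffinity P Q := by
  set s := univ.filter fun ω => P ω ≠ 0
  have hpos : ∀ ω ∈ s, 0 < P ω ∧ 0 < Q ω := fun ω hω => by
    have hPω : P ω ≠ 0 := (mem_filter.1 hω).2
    exact ⟨(hP.1 ω).lt_of_ne' hPω, (hQ.1 ω).lt_of_ne' fun h => hPω (hac ω h)⟩
  have hs : ∑ ω ∈ s, P ω = 1 := hP.2 ▸ sum_filter_ne_zero _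
  have hkl : -klDivFin P Q / 2 = ∑ ω ∈ s, P ω * (-log (P ω / Q ω) / 2) := by
    rw [klDivFin, ← sum_filter_of_ne fun ω _ h => left_ne_zero_of_mul h, ← sum_neg_distrib, sum_div]
    exact sum_congr rfl fun _ _ => by ring
  calc exp (-klDivFin P Q / 2) ≤ ∑ ω ∈ s, P ω * exp (-log (P ω / Q ω) / 2) := by
        rw [hkl]
        simpa only [smul_eq_mul] using
          convexOn_exp.map_sum_le (fun ω hω => (hpos ω hω).1.le) hs fun _ _ => Set.mem_univ _
    _ = ∑ ω ∈ s, √(P ω * Q ω) :=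
        sum_congr rfl fun ω hω => mul_exp_neg_log_div_div_two (hpos ω hω).1 (hpos ω hω).2
    _ ≤ hellingerAffinity P Q :=
        sum_le_sum_of_subset_of_nonneg (subset_univ s) fun _ _ _ => sqrt_nonneg _

lemma klDivFin_nonneg (hP : IsPMF P) (hQ : IsPMF Q)
    (hac : ∀ ω, Q ω = 0 → P ω = 0) : 0 ≤ klDivFin P Q := by
  have h := (exp_neg_klDivFin_div_two_le hP hQ hac).trans (hellingerAffinity_le_one hP hQ)
  rw [exp_le_one_iff] at h
  linarith

end PMF

/-- **TV bound for product distributions.** Let `W`, `Wh` be two DMCs from `𝒳` to `𝒴`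
and `PX` an input pmf.  Then
`TV((Wh·PX)^n, (W·PX)^n) ≤ sqrt(1 − exp(−n·KL(Wh·PX ‖ W·PX)))`
(with the right-hand side equal to `1` when the KL divergence is `∞`). -/
theorem tv_product_le_sqrt {𝒳 𝒴 : Type*} [Fintype 𝒳] [Fintype 𝒴]
    (W Wh : 𝒳 → 𝒴 → ℝ) (hW : IsDMC W) (hWh : IsDMC Wh)
    (PX : 𝒳 → ℝ) (hPX : IsPMF PX) (n : ℕ) :
    tvFin
      (fun p : Fin n → 𝒳 × 𝒴 => ∏ i, PX (p i).1 * Wh (p i).1 (p i).2)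
      (fun p : Fin n → 𝒳 × 𝒴 => ∏ i, PX (p i).1 * W (p i).1 (p i).2)
    ≤ if klDivE (fun q : 𝒳 × 𝒴 => PX q.1 * Wh q.1 q.2)
          (fun q : 𝒳 × 𝒴 => PX q.1 * W q.1 q.2) = ⊤ then 1
      else Real.sqrt (1 - Real.exp (-(n : ℝ) *
        (klDivE (fun q : 𝒳 × 𝒴 => PX q.1 * Wh q.1 q.2)
          (fun q : 𝒳 × 𝒴 => PX q.1 * W q.1 q.2)).toReal)) := by
  set P : 𝒳 × 𝒴 → ℝ := fun q => PX q.1 * Wh q.1 q.2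
  set Q : 𝒳 × 𝒴 → ℝ := fun q => PX q.1 * W q.1 q.2
  have hP : IsPMF P := hWh.isPMF_joint hPX
  have hQ : IsPMF Q := hW.isPMF_joint hPX
  have hLeCam := tvFin_le_sqrt_one_sub_sq_hellingerAffinity (hP.pi (Fin n)) (hQ.pi (Fin n))
  rw [hellingerAffinity_pi hP hQ, Fintype.card_fin] at hLeCam
  by_cases hac : ∀ ω, Q ω = 0 → P ω = 0
  · rw [klDivE, if_pos hac, if_neg ENNReal.ofReal_ne_top,
      ENNReal.toReal_ofReal (klDivFin_nonneg hP hQ hac)]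
    refine hLeCam.trans (sqrt_le_sqrt (sub_le_sub_left ?_ 1))
    calc exp (-n * klDivFin P Q) = exp (-klDivFin P Q / 2) ^ (2 * n) := by
          rw [← exp_nat_mul]; push_cast; ring_nf
      _ ≤ hellingerAffinity P Q ^ (2 * n) :=
          pow_le_pow_left₀ (exp_nonneg _) (exp_neg_klDivFin_div_two_le hP hQ hac) _
      _ = (hellingerAffinity P Q ^ n) ^ 2 := by ring
  · rw [klDivE, if_neg hac, if_pos rfl]
    exact hLeCam.trans (sqrt_le_one.2 (sub_le_self _ (sq_nonneg _)))
end
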